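/- arXiv:2601.19537 — 3 statements merged into one kernel-verified Lean document; each statement's English description precedes it below -/
import Mathlib

section
/- Let n ≥ 7 and let i, j, k be integers with 2 ≤ i ≤ n-5, i+2 < j < n and j+1 < k ≤ n, and set z = (i-1, i)(j-1, k) ∈ S_n. Then s_{j-1}s_j⋯s_{k-2} is a reduced expression (of length k-j), and the strong right Bruhat walk of length k-j whose t-th entry is z·s_{j-1}s_j⋯s_{j+t-3} for 1 ≤ t ≤ k-j (so its entries are z, zs_{j-1}, zs_{j-1}s_j, …, zs_{j-1}s_j⋯s_{k-3}) is compatible with this reduced expression. -/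
/-- The longest element `w₀` of the symmetric group on `Fin n`,
sending `t` to `n - 1 - t` (`0`-based), i.e. `t ↦ n + 1 - t` in `1`-based terms. -/
def w0 (n : ℕ) : Equiv.Perm (Fin n) :=
  ⟨Fin.rev, Fin.rev, fun x => Fin.rev_rev x, fun x => Fin.rev_rev x⟩

/-- The Coxeter length of a permutation: its number of inversions. -/
def len {n : ℕ} (x : Equiv.Perm (Fin n)) : ℕ :=
  (Finset.univ.filter fun ab : Fin n × Fin n => ab.1 < ab.2 ∧ x ab.2 < x ab.1).card

/-- The pattern `p ∈ S_m` consecutively appears in `x ∈ S_n` at (`1`-based) position `i`.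
Permutations of `{1, …, N}` are modelled (`0`-based) as permutations of `Fin N`. -/
def consecAppearsAt {m n : ℕ} (p : Equiv.Perm (Fin m)) (x : Equiv.Perm (Fin n)) (i : ℕ) :
    Prop :=
  ∃ h : 1 ≤ i ∧ i + m ≤ n + 1,
    ∀ a b : Fin m,
      p a < p b ↔
        x ⟨i - 1 + a.val, by have := a.isLt; omega⟩ <
          x ⟨i - 1 + b.val, by have := b.isLt; omega⟩

/-- `x` consecutively contains the pattern `p`. -/
def consecContains {m n : ℕ} (p : Equiv.Perm (Fin m)) (x : Equiv.Perm (Fin n)) : Prop :=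
  ∃ i : ℕ, consecAppearsAt p x i

/-- The pattern `2143 ∈ S₄` (`0`-based one-line notation: `1,0,3,2`). -/
def p2143 : Equiv.Perm (Fin 4) := Equiv.swap 0 1 * Equiv.swap 2 3

/-- The pattern `14325 ∈ S₅` (`0`-based one-line notation: `0,3,2,1,4`). -/
def p14325 : Equiv.Perm (Fin 5) := Equiv.swap 1 3

/-- The pattern `1536247 ∈ S₇` (`0`-based one-line notation: `0,4,2,5,1,3,6`). -/
def p1536247 : Equiv.Perm (Fin 7) := Equiv.swap 1 4 * Equiv.swap 3 5

/-- The pattern `1462537 ∈ S₇` (`0`-based one-line notation: `0,3,5,1,4,2,6`). -/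
def p1462537 : Equiv.Perm (Fin 7) := Equiv.swap 1 3 * Equiv.swap 2 5

/-- The pattern `1423 ∈ S₄` (`0`-based one-line notation: `0,3,1,2`). -/
def p1423 : Equiv.Perm (Fin 4) := Equiv.swap 1 2 * Equiv.swap 1 3

/-- The pattern `2314 ∈ S₄` (`0`-based one-line notation: `1,2,0,3`). -/
def p2314 : Equiv.Perm (Fin 4) := Equiv.swap 0 2 * Equiv.swap 0 1

/-- The simple transposition `s_t = (t, t+1)` (`1`-based) as a permutation of `Fin n`
(junk value `1` if `t` is out of range). -/
def simpleT (n t : ℕ) : Equiv.Perm (Fin n) :=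
  if h : 1 ≤ t ∧ t < n then Equiv.swap ⟨t - 1, by omega⟩ ⟨t, h.2⟩ else 1

/-- The product `s_a s_{a-1} ⋯ s_b` of simple transpositions with descending indices
(the identity if `b > a`). -/
def descProd (n a b : ℕ) : Equiv.Perm (Fin n) :=
  ((List.range (a + 1 - b)).map fun t => simpleT n (a - t)).prod

/-- The product `s_a s_{a+1} ⋯ s_b` of simple transpositions with ascending indices
(the identity if `b < a`). -/
def ascProd (n a b : ℕ) : Equiv.Perm (Fin n) :=
  ((List.range (b + 1 - a)).map fun t => simpleT n (a + t)).prod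

/-- `w s_b < w`, i.e. `s_b` is a right descent of `w`: `w(b) > w(b+1)` (`1`-based). -/
def rdes {n : ℕ} (w : Equiv.Perm (Fin n)) (b : ℕ) : Prop :=
  ∃ h : 1 ≤ b ∧ b < n, w ⟨b, h.2⟩ < w ⟨b - 1, by omega⟩

/-- `w s_b > w`, i.e. `s_b` is a right ascent of `w`: `w(b) < w(b+1)` (`1`-based). -/
def rasc {n : ℕ} (w : Equiv.Perm (Fin n)) (b : ℕ) : Prop :=
  ∃ h : 1 ≤ b ∧ b < n, w ⟨b - 1, by omega⟩ < w ⟨b, h.2⟩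

/-- `(W 1, …, W l)` is a strong right Bruhat walk: consecutive entries differ by right
multiplication by a simple transposition. -/
def isWalk {n : ℕ} (l : ℕ) (W : ℕ → Equiv.Perm (Fin n)) : Prop :=
  ∀ t : ℕ, 1 ≤ t → t + 1 ≤ l → ∃ b : ℕ, 1 ≤ b ∧ b < n ∧ W (t + 1) = W t * simpleT n b

/-- The walk `(W 1, …, W l)` is compatible with the reduced expression
`s_{ι 1} s_{ι 2} ⋯ s_{ι l}`. -/
def compat {n : ℕ} (l : ℕ) (ι : ℕ → ℕ) (W : ℕ → Equiv.Perm (Fin n)) : Prop :=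
  ∀ t : ℕ, 1 ≤ t → t ≤ l →
    rdes (W t) (ι t) ∧
    (2 ≤ t → rasc (W t) (ι (t - 1))) ∧
    (t + 1 ≤ l → rasc (W t) (ι (t + 1)))

/-- Membership in `X_{m,n}^i`: the one-line values at positions `i, i+1, …, i+m-1`
(`1`-based) are increasing. -/
def windowIncr {n : ℕ} (m i : ℕ) (x : Equiv.Perm (Fin n)) : Prop :=
  ∀ a b : Fin n, i - 1 ≤ a.val → a < b → b.val < i - 1 + m → x a < x b

/-- The order-preserving identification of `Fin m` with the window
`{o, o+1, …, o+m-1}` inside `Fin n`. -/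
def shiftEquiv (o m n : ℕ) (h : o + m ≤ n) :
    Fin m ≃ {x : Fin n // o ≤ x.val ∧ x.val < o + m} where
  toFun a := ⟨⟨o + a.val, by have := a.isLt; omega⟩, by
    refine ⟨Nat.le_add_right _ _, ?_⟩
    show o + a.val < o + m
    have := a.isLt; omega⟩
  invFun x := ⟨x.val.val - o, by have := x.prop; omega⟩
  left_inv a := by
    apply Fin.ext
    show o + a.val - o = a.val
    omega
  right_inv x := by
    apply Subtype.ext
    apply Fin.ext
    show o + (x.val.val - o) = x.val.val
    have := x.prop
    omega

/-- The shift `F_{m,n}^i : S_m → S_n`, sending `i+a-1 ↦ i+p(a)-1` (`1`-based) and fixing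
all other points. -/
def shiftPerm (m n i : ℕ) (h : i - 1 + m ≤ n) (p : Equiv.Perm (Fin m)) :
    Equiv.Perm (Fin n) :=
  Equiv.Perm.extendDomain p (shiftEquiv (i - 1) m n h)

/-! The product `s_a s_{a+1} ⋯ s_b` is the cycle moving position `b` (`0`-based) to `a - 1` and
shifting the positions `a - 1, …, b - 1` one step up; its only inversions are the pairs `(x, b)`, so
it has length `b + 1 - a`. Right multiplication of `z` by it rotates the window of one-line values
`z(a-1), z(a), …, z(b)` (`0`-based) so that `z(a-1)` moves to position `b`. Here `z(j-2) = k-1`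
and `z` fixes the positions strictly between `j-2` and `k-1`, so along the walk the large value
`k-1` travels to the right through increasing smaller values: it creates the descent at the current
letter and ascents at its two neighbours. -/

open Equiv

theorem simpleT_apply_val {n t : ℕ} (h1 : 1 ≤ t) (h2 : t < n) (x : Fin n) :
    (simpleT n t x).val = if x.val = t - 1 then t else if x.val = t then t - 1 else x.val := by
  rw [simpleT, dif_pos ⟨h1, h2⟩, swap_apply_def]
  simp only [Fin.ext_iff, apply_ite Fin.val]

theorem ascProd_succ (n a b : ℕ) (h : a ≤ b + 1) :
    ascProd n a (b + 1) = ascProd n a b * simpleT n (b + 1) := by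
  rw [ascProd, ascProd, show b + 1 + 1 - a = b + 1 - a + 1 by omega, List.range_succ,
    List.map_append, List.prod_append]
  simp [show a + (b + 1 - a) = b + 1 by omega]

theorem ascProd_apply_val {n a b : ℕ} (ha : 1 ≤ a) (hab : a ≤ b + 1) (hb : b < n) (x : Fin n) :
    (ascProd n a b x).val =
      if a - 1 ≤ x.val ∧ x.val < b then x.val + 1 else if x.val = b then a - 1 else x.val := by
  induction b, (show a - 1 ≤ b by omega) using Nat.le_induction generalizing x with
  | base =>
    rw [ascProd, show a - 1 + 1 - a = 0 by omega]
    simp only [List.range_zero, List.map_nil, List.prod_nil, Perm.one_apply]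
    split_ifs <;> omega
  | succ b hab' ih =>
    rw [ascProd_succ n a b (by omega), Perm.mul_apply, ih (by omega) (by omega),
      simpleT_apply_val (by omega) hb]
    split_ifs <;> omega

theorem len_ascProd {n a b : ℕ} (ha : 1 ≤ a) (hab : a ≤ b + 1) (hb : b < n) :
    len (ascProd n a b) = b + 1 - a := by
  have inversion_iff : ∀ xy : Fin n × Fin n,
      (xy.1 < xy.2 ∧ ascProd n a b xy.2 < ascProd n a b xy.1) ↔
        a - 1 ≤ xy.1.val ∧ xy.1.val < b ∧ xy.2.val = b := by
    rintro ⟨x, y⟩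
    rw [Fin.lt_def, Fin.lt_def, ascProd_apply_val ha hab hb, ascProd_apply_val ha hab hb]
    split_ifs <;> omega
  rw [len, show b + 1 - a = b - (a - 1) by omega, ← Nat.card_Ico (a - 1) b]
  refine Finset.card_nbij (fun xy => xy.1.val) ?_ ?_ ?_
  · intro xy hxy
    have := (inversion_iff xy).mp (Finset.mem_filter.mp hxy).2
    simp only [Finset.coe_Ico, Set.mem_Ico]
    omega
  · intro xy hxy xy' hxy' hfst
    have h := (inversion_iff xy).mp (Finset.mem_filter.mp hxy).2
    have h' := (inversion_iff xy').mp (Finset.mem_filter.mp hxy').2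
    exact Prod.ext (Fin.ext hfst) (Fin.ext (by omega))
  · intro p hp
    simp only [Finset.coe_Ico, Set.mem_Ico] at hp
    refine ⟨(⟨p, by omega⟩, ⟨b, hb⟩), ?_, rfl⟩
    exact Finset.mem_filter.mpr
      ⟨Finset.mem_univ _, (inversion_iff (⟨p, _⟩, ⟨b, hb⟩)).mpr ⟨hp.1, hp.2, rfl⟩⟩

theorem isWalk_mul_ascProd {n a l : ℕ} (w : Perm (Fin n)) (ha : 1 ≤ a) (hl : a + l ≤ n + 1) :
    isWalk l (fun t => w * ascProd n a (a + t - 2)) := by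
  intro t ht htl
  refine ⟨a + t - 1, by omega, by omega, ?_⟩
  show w * ascProd n a (a + (t + 1) - 2) = w * ascProd n a (a + t - 2) * simpleT n (a + t - 1)
  rw [show a + (t + 1) - 2 = a + t - 2 + 1 by omega, ascProd_succ n a _ (by omega),
    show a + t - 2 + 1 = a + t - 1 by omega, mul_assoc]

section MulAscProd

variable {n a b : ℕ} (w : Perm (Fin n)) (ha : 1 ≤ a) (hab : a ≤ b + 1) (hb : b < n)
include ha hab hb

theorem mul_ascProd_apply_of_mem_Ico (x : Fin n) (h1 : a - 1 ≤ x.val) (h2 : x.val < b) :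
    (w * ascProd n a b) x = w ⟨x.val + 1, by omega⟩ :=
  congrArg w (Fin.ext (by simp only [ascProd_apply_val ha hab hb]; split_ifs <;> omega))

theorem mul_ascProd_apply_of_val_eq (x : Fin n) (h : x.val = b) :
    (w * ascProd n a b) x = w ⟨a - 1, by omega⟩ :=
  congrArg w (Fin.ext (by simp only [ascProd_apply_val ha hab hb]; split_ifs <;> omega))

theorem mul_ascProd_apply_of_lt (x : Fin n) (h : b < x.val) : (w * ascProd n a b) x = w x :=
  congrArg w (Fin.ext (by simp only [ascProd_apply_val ha hab hb]; split_ifs <;> omega))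

end MulAscProd

theorem compat_mul_ascProd {n a l : ℕ} (w : Perm (Fin n)) (ha : 1 ≤ a) (hl : a + l ≤ n)
    (hmax : ∀ x : Fin n, a ≤ x.val → x.val < a + l → w x < w ⟨a - 1, by omega⟩)
    (hmono : ∀ x y : Fin n, a ≤ x.val → x < y → y.val < a + l → w x < w y) :
    compat l (fun t => a + t - 1) (fun t => w * ascProd n a (a + t - 2)) := by
  intro t ht htl
  beta_reduce
  have hab : a ≤ a + t - 2 + 1 := by omega
  have hb : a + t - 2 < n := by omega
  refine ⟨⟨⟨by omega, by omega⟩, ?_⟩, fun ht2 => ⟨⟨by omega, by omega⟩, ?_⟩,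
    fun htl' => ⟨⟨by omega, by omega⟩, ?_⟩⟩
  · rw [mul_ascProd_apply_of_lt w ha hab hb _ (by simp only; omega),
      mul_ascProd_apply_of_val_eq w ha hab hb _ (by simp only; omega)]
    exact hmax _ (by simp only; omega) (by simp only; omega)
  · rw [mul_ascProd_apply_of_mem_Ico w ha hab hb _ (by simp only; omega) (by simp only; omega),
      mul_ascProd_apply_of_val_eq w ha hab hb _ (by simp only; omega)]
    exact hmax _ (by simp only; omega) (by simp only; omega)
  · rw [mul_ascProd_apply_of_lt w ha hab hb _ (by simp only; omega),
      mul_ascProd_apply_of_lt w ha hab hb _ (by simp only; omega)]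
    exact hmono _ _ (by simp only; omega) (Fin.lt_def.mpr (by simp only; omega))
      (by simp only; omega)

theorem stmt15 (n i j k : ℕ)
    (hij : i + 2 < j) (hjk : j + 1 < k) (hk : k ≤ n)
    (z : Equiv.Perm (Fin n))
    (hz : z = Equiv.swap ⟨i - 2, by omega⟩ ⟨i - 1, by omega⟩ *
              Equiv.swap ⟨j - 2, by omega⟩ ⟨k - 1, by omega⟩) :
    len (ascProd n (j - 1) (k - 2)) = k - j ∧
    isWalk (k - j) (fun t => z * ascProd n (j - 1) (j + t - 3)) ∧
    compat (k - j) (fun t => j + t - 2) (fun t => z * ascProd n (j - 1) (j + t - 3)) := by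
  have hz_fix : ∀ x : Fin n, j - 1 ≤ x.val → x.val < k - 1 → z x = x := by
    intro x h1 h2
    rw [hz, Perm.mul_apply, swap_apply_of_ne_of_ne (x := x), swap_apply_of_ne_of_ne (x := x)] <;>
      simp only [ne_eq, Fin.ext_iff] <;> omega
  have hz_left : ∀ x : Fin n, x.val = j - 2 → z x = ⟨k - 1, by omega⟩ := by
    intro x hx
    rw [hz, Perm.mul_apply, show x = ⟨j - 2, by omega⟩ from Fin.ext hx, swap_apply_left,
      swap_apply_of_ne_of_ne] <;>
      simp only [ne_eq, Fin.ext_iff] <;> omega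
  have hwalk : (fun t => z * ascProd n (j - 1) (j + t - 3)) =
      fun t => z * ascProd n (j - 1) (j - 1 + t - 2) := by
    funext t; congr 2; omega
  have hletters : (fun t => j + t - 2) = fun t => j - 1 + t - 1 := by
    funext t; omega
  refine ⟨by rw [len_ascProd] <;> omega, hwalk ▸ isWalk_mul_ascProd z (by omega) (by omega), ?_⟩
  rw [hwalk, hletters]
  refine compat_mul_ascProd z (by omega) (by omega) (fun x h1 h2 => ?_) (fun x y h1 hxy h2 => ?_)
  · rw [hz_fix x h1 (by omega), hz_left _ (by simp only; omega), Fin.lt_def]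
    simp only; omega
  · rwa [hz_fix x h1 (by omega), hz_fix y (by omega) (by omega)]
end

section
/- Let n ≥ 7 and let i, j, k be integers with 2 ≤ i ≤ n-5, i+2 < j < n and j+1 < k ≤ n, and set z = (i-1, i)(j-1, k) ∈ S_n. Then s_{j-1}s_{j-2}⋯s_i is a reduced expression (of length j-i), and the strong right Bruhat walk of length j-i whose t-th entry is z·s_{j-2}s_{j-3}⋯s_{j-t} for 1 ≤ t ≤ j-i (so its entries are z, zs_{j-2}, zs_{j-2}s_{j-3}, …, zs_{j-2}s_{j-3}⋯s_i) is compatible with this reduced expression. -/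
lemma simpleT_apply (n t : ℕ) (h1 : 1 ≤ t) (h2 : t < n) (x : Fin n) :
    (simpleT n t x).val = if x.val = t - 1 then t else if x.val = t then t - 1 else x.val := by
  simp only [simpleT, dif_pos (show 1 ≤ t ∧ t < n from ⟨h1, h2⟩), Equiv.swap_apply_def]
  split_ifs with hA hB hC hD hE <;>
    simp only [Fin.ext_iff, Fin.val_mk] at * <;> omega

lemma descProd_nil (n a b : ℕ) (h : a < b) : descProd n a b = 1 := by
  unfold descProd
  have h0 : a + 1 - b = 0 := by omega
  rw [h0]
  rfl

lemma descProd_succ (n a b : ℕ) (hb : 1 ≤ b) (h : b ≤ a) :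
    descProd n a b = simpleT n a * descProd n (a - 1) b := by
  unfold descProd
  have h1 : a + 1 - b = (a - b) + 1 := by omega
  have h2 : a - 1 + 1 - b = a - b := by omega
  rw [h1, h2, List.range_succ_eq_map, List.map_cons, List.prod_cons, List.map_map]
  refine congrArg _ (congrArg _ (List.map_congr_left fun t _ => ?_))
  simp only [Function.comp_apply]
  congr 1
  omega

lemma descProd_step (n a b : ℕ) (h : b ≤ a) :
    descProd n a b = descProd n a (b + 1) * simpleT n b := by
  unfold descProd
  have h1 : a + 1 - b = (a - b) + 1 := by omega
  have h2 : a + 1 - (b + 1) = a - b := by omega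
  have h3 : a - (a - b) = b := by omega
  rw [h1, h2, List.range_succ, List.map_append, List.prod_append]
  simp only [List.map_cons, List.map_nil, List.prod_cons, List.prod_nil, mul_one, h3]

lemma descProd_apply (n b : ℕ) (hb : 1 ≤ b) (a : ℕ) (hba : b - 1 ≤ a) :
    ∀ (_ : a < n) (x : Fin n),
      (descProd n a b x).val =
        if x.val = b - 1 then a else if b ≤ x.val ∧ x.val ≤ a then x.val - 1 else x.val := by
  induction a, hba using Nat.le_induction with
  | base =>
    intro han x
    rw [descProd_nil n (b - 1) b (by omega)]
    simp only [Equiv.Perm.one_apply]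
    split_ifs <;> omega
  | succ a ha ih =>
    intro han x
    rw [descProd_succ n (a + 1) b hb (by omega), Equiv.Perm.mul_apply, Nat.add_sub_cancel,
      simpleT_apply n (a + 1) (by omega) han, ih (by omega) x]
    split_ifs <;> omega

lemma twoswap_apply (n p q r s : ℕ) (hpq : p < q) (hqr : q < r) (hrs : r < s) (hs : s < n)
    (x : Fin n) :
    ((Equiv.swap ⟨p, by omega⟩ ⟨q, by omega⟩ *
        Equiv.swap ⟨r, by omega⟩ ⟨s, hs⟩ : Equiv.Perm (Fin n)) x).val =
      if x.val = p then q else if x.val = q then p else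
      if x.val = r then s else if x.val = s then r else x.val := by
  rw [Equiv.Perm.mul_apply, Equiv.swap_apply_def, Equiv.swap_apply_def]
  split_ifs <;> simp only [Fin.ext_iff, Fin.val_mk] at * <;> omega
set_option maxHeartbeats 1000000 in
theorem stmt16 (n i j k : ℕ) (hn : 7 ≤ n) (hi : 2 ≤ i) (hi' : i ≤ n - 5)
    (hij : i + 2 < j) (hj : j < n) (hjk : j + 1 < k) (hk : k ≤ n)
    (z : Equiv.Perm (Fin n))
    (hz : z = Equiv.swap ⟨i - 2, by omega⟩ ⟨i - 1, by omega⟩ *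
              Equiv.swap ⟨j - 2, by omega⟩ ⟨k - 1, by omega⟩) :
    len (descProd n (j - 1) i) = j - i ∧
    isWalk (j - i) (fun t => z * descProd n (j - 2) (j - t)) ∧
    compat (j - i) (fun t => j - t) (fun t => z * descProd n (j - 2) (j - t)) := by
  have hzv : ∀ y : Fin n, (z y).val =
      if y.val = i - 2 then i - 1 else if y.val = i - 1 then i - 2 else
      if y.val = j - 2 then k - 1 else if y.val = k - 1 then j - 2 else y.val := by
    intro y
    rw [hz]
    exact twoswap_apply n (i - 2) (i - 1) (j - 2) (k - 1)
      (by omega) (by omega) (by omega) (by omega) y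
  refine ⟨?_, ?_, ?_⟩
  · -- length
    have hform := descProd_apply n i (by omega) (j - 1) (by omega) (by omega)
    unfold len
    rw [Finset.filter_congr (q := fun ab : Fin n × Fin n =>
        ab.1.val = i - 1 ∧ i ≤ ab.2.val ∧ ab.2.val ≤ j - 1) ?_]
    · rw [show j - i = (Finset.Ico i j).card by rw [Nat.card_Ico]]
      refine Finset.card_bij' (fun ab _ => ab.2.val)
        (fun m hm => (⟨i - 1, by omega⟩,
          ⟨m, by have := (Finset.mem_Ico.mp hm).2; omega⟩)) ?_ ?_ ?_ ?_
      · intro ab hab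
        simp only [Finset.mem_filter, Finset.mem_univ, true_and] at hab
        simp only [Finset.mem_Ico]
        omega
      · intro m hm
        have := Finset.mem_Ico.mp hm
        simp only [Finset.mem_filter, Finset.mem_univ, true_and, Fin.val_mk]
        omega
      · intro ab hab
        simp only [Finset.mem_filter, Finset.mem_univ, true_and] at hab
        ext
        · simp only [Fin.val_mk]; omega
        · simp only [Fin.val_mk]
      · intro m hm
        simp only [Fin.val_mk]
    · intro ab _
      have h1 := ab.1.isLt
      have h2 := ab.2.isLt
      simp only [Fin.lt_def, hform ab.1, hform ab.2]
      constructor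
      · rintro ⟨hlt, hvals⟩
        split_ifs at hvals <;> omega
      · rintro ⟨ha1, ha2, ha3⟩
        split_ifs <;> omega
  · -- isWalk
    intro t ht htl
    refine ⟨j - t - 1, by omega, by omega, ?_⟩
    show z * descProd n (j - 2) (j - (t + 1)) =
      z * descProd n (j - 2) (j - t) * simpleT n (j - t - 1)
    have e1 : j - (t + 1) = j - t - 1 := by omega
    have e2 : j - t - 1 + 1 = j - t := by omega
    rw [e1, descProd_step n (j - 2) (j - t - 1) (by omega), e2, mul_assoc]
  · -- compat
    intro t ht htl
    have hform := descProd_apply n (j - t) (by omega) (j - 2) (by omega) (by omega)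
    have key : ∀ (x : ℕ) (hx : x < n), ((z * descProd n (j - 2) (j - t)) ⟨x, hx⟩).val =
        (if (if x = j - t - 1 then j - 2 else
             if j - t ≤ x ∧ x ≤ j - 2 then x - 1 else x) = i - 2 then i - 1 else
         if (if x = j - t - 1 then j - 2 else
             if j - t ≤ x ∧ x ≤ j - 2 then x - 1 else x) = i - 1 then i - 2 else
         if (if x = j - t - 1 then j - 2 else
             if j - t ≤ x ∧ x ≤ j - 2 then x - 1 else x) = j - 2 then k - 1 else
         if (if x = j - t - 1 then j - 2 else
             if j - t ≤ x ∧ x ≤ j - 2 then x - 1 else x) = k - 1 then j - 2 else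
         (if x = j - t - 1 then j - 2 else
             if j - t ≤ x ∧ x ≤ j - 2 then x - 1 else x)) := by
      intro x hx
      rw [Equiv.Perm.mul_apply, hzv, hform, Fin.val_mk]
    have vA : ∀ hx : j - t - 1 < n,
        ((z * descProd n (j - 2) (j - t)) ⟨j - t - 1, hx⟩).val = k - 1 := by
      intro hx; rw [key]; split_ifs <;> omega
    have vB : ∀ hx : j - t < n,
        ((z * descProd n (j - 2) (j - t)) ⟨j - t, hx⟩).val ≤ j - 1 := by
      intro hx; rw [key]; split_ifs <;> omega
    have vE : 2 ≤ t → ∀ hx : j - (t - 1) - 1 < n,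
        ((z * descProd n (j - 2) (j - t)) ⟨j - (t - 1) - 1, hx⟩).val < j - t := by
      intro ht2 hx; rw [key]; split_ifs <;> omega
    have vF : 2 ≤ t → ∀ hx : j - (t - 1) < n,
        j - t ≤ ((z * descProd n (j - 2) (j - t)) ⟨j - (t - 1), hx⟩).val := by
      intro ht2 hx; rw [key]; split_ifs <;> omega
    have vG : t + 1 ≤ j - i → ∀ hx : j - (t + 1) - 1 < n,
        ((z * descProd n (j - 2) (j - t)) ⟨j - (t + 1) - 1, hx⟩).val < k - 1 := by
      intro ht3 hx; rw [key]; split_ifs <;> omega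
    have vH : t + 1 ≤ j - i → ∀ hx : j - (t + 1) < n,
        ((z * descProd n (j - 2) (j - t)) ⟨j - (t + 1), hx⟩).val = k - 1 := by
      intro ht3 hx; rw [key]; split_ifs <;> omega
    refine ⟨?_, ?_, ?_⟩
    · show rdes (z * descProd n (j - 2) (j - t)) (j - t)
      refine ⟨⟨by omega, by omega⟩, ?_⟩
      rw [Fin.lt_def, vA]
      exact lt_of_le_of_lt (vB _) (by omega)
    · intro ht2
      show rasc (z * descProd n (j - 2) (j - t)) (j - (t - 1))
      refine ⟨⟨by omega, by omega⟩, ?_⟩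
      rw [Fin.lt_def]
      exact lt_of_lt_of_le (vE ht2 _) (vF ht2 _)
    · intro ht3
      show rasc (z * descProd n (j - 2) (j - t)) (j - (t + 1))
      refine ⟨⟨by omega, by omega⟩, ?_⟩
      rw [Fin.lt_def, vH ht3]
      exact vG ht3 _
end

section
/- Let n ≥ 6 and let i, k be integers with 2 ≤ i ≤ n-4 and i+2 < k < n, and set z = (i-1, k)(k-1, k+1) ∈ S_n. Then: (1) s_{i-1}s_i⋯s_{k-3} is a reduced expression, and the strong right Bruhat walk of length k-i-1 whose t-th entry is z·s_{i-1}s_i⋯s_{i+t-3} for 1 ≤ t ≤ k-i-1 (so its entries are z, zs_{i-1}, zs_{i-1}s_i, …, zs_{i-1}s_i⋯s_{k-4}) is compatible with it; and (2) s_{k-1}s_{k-2}s_{k-3} is a reduced expression, and the strong right Bruhat walk (z, zs_{k-1}, zs_{k-1}s_{k-2}) is compatible with it. -/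
section Aux

/-- Value function of a simple transposition. -/
def sFn (t x : ℕ) : ℕ := if x = t - 1 then t else if x = t then t - 1 else x

lemma simpleT_val {n : ℕ} (t : ℕ) (h1 : 1 ≤ t) (h2 : t < n) (x : Fin n) :
    ((simpleT n t) x).val = sFn t x.val := by
  have e : simpleT n t = Equiv.swap ⟨t - 1, by omega⟩ ⟨t, h2⟩ := dif_pos ⟨h1, h2⟩
  rw [e]
  rcases eq_or_ne x ⟨t - 1, by omega⟩ with h | h
  · subst h
    rw [Equiv.swap_apply_left]
    show t = sFn t (t - 1)
    simp [sFn]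
  · rcases eq_or_ne x ⟨t, h2⟩ with h' | h'
    · subst h'
      rw [Equiv.swap_apply_right]
      show t - 1 = sFn t t
      simp only [sFn]
      split_ifs <;> omega
    · rw [Equiv.swap_apply_of_ne_of_ne h h']
      have hx : x.val ≠ t - 1 := fun hh => h (Fin.ext hh)
      have hx' : x.val ≠ t := fun hh => h' (Fin.ext hh)
      simp only [sFn]
      split_ifs <;> omega

/-- Value function of `ascProd n a b`. -/
def ascFn (a b x : ℕ) : ℕ :=
  if x = b ∧ a ≤ b then a - 1 else if a - 1 ≤ x ∧ x < b then x + 1 else x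

lemma ascProd_empty {n a b : ℕ} (h : b + 1 ≤ a) : ascProd n a b = 1 := by
  simp [ascProd, Nat.sub_eq_zero_of_le h]

lemma ascProd_step {n a b : ℕ} (h : a ≤ b + 1) :
    ascProd n a (b + 1) = ascProd n a b * simpleT n (b + 1) := by
  unfold ascProd
  rw [show b + 1 + 1 - a = (b + 1 - a) + 1 by omega, List.range_succ, List.map_append,
    List.prod_append]
  simp only [List.map_cons, List.map_nil, List.prod_cons, List.prod_nil, mul_one]
  congr 2
  omega

lemma ascProd_val {n a : ℕ} (ha : 1 ≤ a) :
    ∀ b, b < n → ∀ x : Fin n, ((ascProd n a b) x).val = ascFn a b x.val := by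
  intro b
  induction b with
  | zero =>
    intro _ x
    rw [ascProd_empty (by omega)]
    simp only [Equiv.Perm.one_apply, ascFn]
    split_ifs <;> omega
  | succ b IH =>
    intro hb x
    by_cases hab : a ≤ b + 1
    · rw [ascProd_step hab, Equiv.Perm.mul_apply, IH (by omega),
        simpleT_val (b + 1) (by omega) hb]
      simp only [ascFn, sFn]
      split_ifs <;> omega
    · rw [ascProd_empty (by omega)]
      simp only [Equiv.Perm.one_apply, ascFn]
      split_ifs <;> omega

/-- Value function of `descProd n a b`. -/
def descFn (a b x : ℕ) : ℕ :=
  if x = b - 1 ∧ b ≤ a then a else if b ≤ x ∧ x ≤ a then x - 1 else x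

lemma descProd_empty {n a b : ℕ} (h : a + 1 ≤ b) : descProd n a b = 1 := by
  simp [descProd, Nat.sub_eq_zero_of_le h]

lemma descProd_front {n a b : ℕ} (h : b ≤ a + 1) :
    descProd n (a + 1) b = simpleT n (a + 1) * descProd n a b := by
  unfold descProd
  rw [show a + 1 + 1 - b = (a + 1 - b) + 1 by omega, List.range_succ_eq_map]
  simp only [List.map_cons, List.prod_cons, Nat.sub_zero, List.map_map]
  have hmc : List.map ((fun t => simpleT n (a + 1 - t)) ∘ Nat.succ) (List.range (a + 1 - b)) =
      List.map (fun t => simpleT n (a - t)) (List.range (a + 1 - b)) := by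
    apply List.map_congr_left
    intro t _
    simp only [Function.comp_apply]
    congr 1
    omega
  rw [hmc]

lemma descProd_peel {n a b : ℕ} (h : b ≤ a) :
    descProd n a b = descProd n a (b + 1) * simpleT n b := by
  unfold descProd
  rw [show a + 1 - b = (a + 1 - (b + 1)) + 1 by omega, List.range_succ, List.map_append,
    List.prod_append]
  simp only [List.map_cons, List.map_nil, List.prod_cons, List.prod_nil, mul_one]
  congr 2
  omega

lemma descProd_val {n b : ℕ} (hb : 1 ≤ b) :
    ∀ a, a < n → ∀ x : Fin n, ((descProd n a b) x).val = descFn a b x.val := by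
  intro a
  induction a with
  | zero =>
    intro _ x
    rw [descProd_empty (by omega)]
    simp only [Equiv.Perm.one_apply, descFn]
    split_ifs <;> omega
  | succ a IH =>
    intro ha x
    by_cases hab : b ≤ a + 1
    · rw [descProd_front hab, Equiv.Perm.mul_apply, simpleT_val (a + 1) (by omega) ha,
        IH (by omega)]
      simp only [descFn, sFn]
      split_ifs <;> omega
    · rw [descProd_empty (by omega)]
      simp only [Equiv.Perm.one_apply, descFn]
      split_ifs <;> omega

/-- Length of a permutation all whose inversions have second coordinate `c` and first
coordinate in `[lo, hi)`. -/
lemma len_eq_fst {n : ℕ} (x : Equiv.Perm (Fin n)) (c lo hi : ℕ) (hhi : hi ≤ n) (hc : c < n)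
    (hm : ∀ ab : Fin n × Fin n,
      (ab.1 < ab.2 ∧ x ab.2 < x ab.1) ↔ (lo ≤ ab.1.val ∧ ab.1.val < hi ∧ ab.2.val = c)) :
    len x = hi - lo := by
  unfold len
  rw [show hi - lo = (Finset.Ico lo hi).card from (Nat.card_Ico lo hi).symm]
  apply Finset.card_bij (fun ab _ => ab.1.val)
  · intro ab hab
    simp only [Finset.mem_filter, Finset.mem_univ, true_and] at hab
    have := (hm ab).1 hab
    rw [Finset.mem_Ico]
    omega
  · intro a1 h1 a2 h2 he
    simp only [Finset.mem_filter, Finset.mem_univ, true_and] at h1 h2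
    have e1 := (hm a1).1 h1
    have e2 := (hm a2).1 h2
    have : a1.1 = a2.1 := Fin.ext he
    have : a1.2 = a2.2 := Fin.ext (by omega)
    exact Prod.ext ‹a1.1 = a2.1› this
  · intro j hj
    rw [Finset.mem_Ico] at hj
    have hm' := (hm ((⟨j, by omega⟩ : Fin n), (⟨c, hc⟩ : Fin n))).2 ⟨hj.1, hj.2, rfl⟩
    exact ⟨((⟨j, by omega⟩ : Fin n), (⟨c, hc⟩ : Fin n)),
      Finset.mem_filter.2 ⟨Finset.mem_univ _, hm'⟩, rfl⟩

/-- Length of a permutation all whose inversions have first coordinate `c` and second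
coordinate in `[lo, hi)`. -/
lemma len_eq_snd {n : ℕ} (x : Equiv.Perm (Fin n)) (c lo hi : ℕ) (hhi : hi ≤ n) (hc : c < n)
    (hm : ∀ ab : Fin n × Fin n,
      (ab.1 < ab.2 ∧ x ab.2 < x ab.1) ↔ (ab.1.val = c ∧ lo ≤ ab.2.val ∧ ab.2.val < hi)) :
    len x = hi - lo := by
  unfold len
  rw [show hi - lo = (Finset.Ico lo hi).card from (Nat.card_Ico lo hi).symm]
  apply Finset.card_bij (fun ab _ => ab.2.val)
  · intro ab hab
    simp only [Finset.mem_filter, Finset.mem_univ, true_and] at hab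
    have := (hm ab).1 hab
    rw [Finset.mem_Ico]
    omega
  · intro a1 h1 a2 h2 he
    simp only [Finset.mem_filter, Finset.mem_univ, true_and] at h1 h2
    have e1 := (hm a1).1 h1
    have e2 := (hm a2).1 h2
    have h2' : a1.2 = a2.2 := Fin.ext he
    have h1' : a1.1 = a2.1 := Fin.ext (by omega)
    exact Prod.ext h1' h2'
  · intro j hj
    rw [Finset.mem_Ico] at hj
    have hm' := (hm ((⟨c, hc⟩ : Fin n), (⟨j, by omega⟩ : Fin n))).2 ⟨rfl, hj.1, hj.2⟩
    exact ⟨((⟨c, hc⟩ : Fin n), (⟨j, by omega⟩ : Fin n)),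
      Finset.mem_filter.2 ⟨Finset.mem_univ _, hm'⟩, rfl⟩

/-- Value function of `z`. -/
def zFn (i k x : ℕ) : ℕ :=
  if x = i - 2 then k - 1 else if x = k - 1 then i - 2
  else if x = k - 2 then k else if x = k then k - 2 else x

lemma flt {n : ℕ} (w : Equiv.Perm (Fin n)) (g : ℕ → ℕ)
    (hw : ∀ x : Fin n, (w x).val = g x.val) (B C : ℕ) (hB : B < n) (hC : C < n)
    (h : g B < g C) : w ⟨B, hB⟩ < w ⟨C, hC⟩ := by
  rw [Fin.lt_def, hw, hw]
  exact h

end Aux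


theorem stmt17 (n i k : ℕ) (hn : 6 ≤ n) (hi : 2 ≤ i) (hi' : i ≤ n - 4)
    (hik : i + 2 < k) (hk : k < n)
    (z : Equiv.Perm (Fin n))
    (hz : z = Equiv.swap ⟨i - 2, by omega⟩ ⟨k - 1, by omega⟩ *
              Equiv.swap ⟨k - 2, by omega⟩ ⟨k, by omega⟩) :
    (len (ascProd n (i - 1) (k - 3)) = k - i - 1 ∧
      isWalk (k - i - 1) (fun t => z * ascProd n (i - 1) (i + t - 3)) ∧
      compat (k - i - 1) (fun t => i + t - 2)
        (fun t => z * ascProd n (i - 1) (i + t - 3))) ∧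
    (len (descProd n (k - 1) (k - 3)) = 3 ∧
      isWalk 3 (fun t => z * descProd n (k - 1) (k - t + 1)) ∧
      compat 3 (fun t => k - t) (fun t => z * descProd n (k - 1) (k - t + 1))) := by
  have hzval : ∀ y : Fin n, (z y).val = zFn i k y.val := by
    have hne : ∀ (a b : ℕ) (ha : a < n) (hb : b < n), a ≠ b → (⟨a, ha⟩ : Fin n) ≠ ⟨b, hb⟩ :=
      fun a b ha hb hab => by simp only [ne_eq, Fin.mk.injEq]; exact hab
    intro y
    rw [hz, Equiv.Perm.mul_apply]
    rcases eq_or_ne y ⟨k - 2, by omega⟩ with h | h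
    · subst h
      rw [Equiv.swap_apply_left,
        Equiv.swap_apply_of_ne_of_ne (hne _ _ _ _ (by omega)) (hne _ _ _ _ (by omega))]
      show k = zFn i k (k - 2)
      simp only [zFn]; split_ifs <;> omega
    · rcases eq_or_ne y ⟨k, by omega⟩ with h' | h'
      · subst h'
        rw [Equiv.swap_apply_right,
          Equiv.swap_apply_of_ne_of_ne (hne _ _ _ _ (by omega)) (hne _ _ _ _ (by omega))]
        show k - 2 = zFn i k k
        simp only [zFn]; split_ifs <;> omega
      · rw [Equiv.swap_apply_of_ne_of_ne h h']
        have h2 : y.val ≠ k - 2 := fun hh => h (Fin.ext hh)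
        have h3 : y.val ≠ k := fun hh => h' (Fin.ext hh)
        rcases eq_or_ne y ⟨i - 2, by omega⟩ with h4 | h4
        · subst h4
          rw [Equiv.swap_apply_left]
          show k - 1 = zFn i k (i - 2)
          simp only [zFn]; split_ifs <;> omega
        · rcases eq_or_ne y ⟨k - 1, by omega⟩ with h5 | h5
          · subst h5
            rw [Equiv.swap_apply_right]
            show i - 2 = zFn i k (k - 1)
            simp only [zFn]; split_ifs <;> omega
          · rw [Equiv.swap_apply_of_ne_of_ne h4 h5]
            have h6 : y.val ≠ i - 2 := fun hh => h4 (Fin.ext hh)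
            have h7 : y.val ≠ k - 1 := fun hh => h5 (Fin.ext hh)
            simp only [zFn]; split_ifs <;> omega
  have key1 : ∀ (b : ℕ), b < n → ∀ x : Fin n,
      ((z * ascProd n (i - 1) b) x).val = zFn i k (ascFn (i - 1) b x.val) := by
    intro b hb x
    rw [Equiv.Perm.mul_apply, hzval, ascProd_val (by omega) b hb]
  have key2 : ∀ (b : ℕ), 1 ≤ b → ∀ x : Fin n,
      ((z * descProd n (k - 1) b) x).val = zFn i k (descFn (k - 1) b x.val) := by
    intro b hb x
    rw [Equiv.Perm.mul_apply, hzval, descProd_val hb (k - 1) (by omega)]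
  refine ⟨⟨?_, ?_, ?_⟩, ?_, ?_, ?_⟩
  · -- length of ascProd
    rw [len_eq_fst (ascProd n (i - 1) (k - 3)) (k - 3) (i - 2) (k - 3) (by omega) (by omega) ?_]
    · omega
    · intro ab
      have ha := ab.1.isLt
      have hb := ab.2.isLt
      simp only [Fin.lt_def, ascProd_val (n := n) (show 1 ≤ i - 1 by omega) (k - 3) (by omega), ascFn]
      split_ifs <;> omega
  · -- walk 1
    intro t ht ht'
    refine ⟨i + t - 2, by omega, by omega, ?_⟩
    show z * ascProd n (i - 1) (i + (t + 1) - 3) =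
      z * ascProd n (i - 1) (i + t - 3) * simpleT n (i + t - 2)
    rw [mul_assoc]
    congr 1
    rw [show i + (t + 1) - 3 = (i + t - 3) + 1 by omega,
      show i + t - 2 = (i + t - 3) + 1 by omega]
    exact ascProd_step (by omega)
  · -- compat 1
    intro t ht ht'
    refine ⟨⟨⟨(by omega : 1 ≤ i + t - 2), (by omega : i + t - 2 < n)⟩, ?_⟩,
      fun ht2 => ⟨⟨(by omega : 1 ≤ i + (t - 1) - 2), (by omega : i + (t - 1) - 2 < n)⟩, ?_⟩,
      fun ht3 => ⟨⟨(by omega : 1 ≤ i + (t + 1) - 2), (by omega : i + (t + 1) - 2 < n)⟩, ?_⟩⟩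
    · refine flt (z * ascProd n (i - 1) (i + t - 3))
        (fun v => zFn i k (ascFn (i - 1) (i + t - 3) v)) (key1 (i + t - 3) (by omega))
        (i + t - 2) (i + t - 2 - 1) (by omega) (by omega) ?_
      show zFn i k (ascFn (i - 1) (i + t - 3) (i + t - 2)) <
        zFn i k (ascFn (i - 1) (i + t - 3) (i + t - 2 - 1))
      rw [show ascFn (i - 1) (i + t - 3) (i + t - 2) = i + t - 2 from by
            simp only [ascFn]; split_ifs <;> omega,
          show ascFn (i - 1) (i + t - 3) (i + t - 2 - 1) = i - 2 from by
            simp only [ascFn]; split_ifs <;> omega]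
      simp only [zFn]
      split_ifs <;> omega
    · refine flt (z * ascProd n (i - 1) (i + t - 3))
        (fun v => zFn i k (ascFn (i - 1) (i + t - 3) v)) (key1 (i + t - 3) (by omega))
        (i + (t - 1) - 2 - 1) (i + (t - 1) - 2) (by omega) (by omega) ?_
      show zFn i k (ascFn (i - 1) (i + t - 3) (i + (t - 1) - 2 - 1)) <
        zFn i k (ascFn (i - 1) (i + t - 3) (i + (t - 1) - 2))
      rw [show ascFn (i - 1) (i + t - 3) (i + (t - 1) - 2 - 1) = i + t - 3 from by
            simp only [ascFn]; split_ifs <;> omega,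
          show ascFn (i - 1) (i + t - 3) (i + (t - 1) - 2) = i - 2 from by
            simp only [ascFn]; split_ifs <;> omega]
      simp only [zFn]
      split_ifs <;> omega
    · refine flt (z * ascProd n (i - 1) (i + t - 3))
        (fun v => zFn i k (ascFn (i - 1) (i + t - 3) v)) (key1 (i + t - 3) (by omega))
        (i + (t + 1) - 2 - 1) (i + (t + 1) - 2) (by omega) (by omega) ?_
      show zFn i k (ascFn (i - 1) (i + t - 3) (i + (t + 1) - 2 - 1)) <
        zFn i k (ascFn (i - 1) (i + t - 3) (i + (t + 1) - 2))
      rw [show ascFn (i - 1) (i + t - 3) (i + (t + 1) - 2 - 1) = i + t - 2 from by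
            simp only [ascFn]; split_ifs <;> omega,
          show ascFn (i - 1) (i + t - 3) (i + (t + 1) - 2) = i + t - 1 from by
            simp only [ascFn]; split_ifs <;> omega]
      simp only [zFn]
      split_ifs <;> omega
  · -- length of descProd
    rw [len_eq_snd (descProd n (k - 1) (k - 3)) (k - 4) (k - 3) k (by omega) (by omega) ?_]
    · omega
    · intro ab
      have ha := ab.1.isLt
      have hb := ab.2.isLt
      simp only [Fin.lt_def, descProd_val (n := n) (show 1 ≤ k - 3 by omega) (k - 1) (by omega), descFn]
      split_ifs <;> omega
  · -- walk 2
    intro t ht ht'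
    refine ⟨k - t, by omega, by omega, ?_⟩
    show z * descProd n (k - 1) (k - (t + 1) + 1) =
      z * descProd n (k - 1) (k - t + 1) * simpleT n (k - t)
    rw [mul_assoc, show k - (t + 1) + 1 = k - t by omega]
    congr 1
    exact descProd_peel (by omega)
  · -- compat 2
    intro t ht ht'
    refine ⟨⟨⟨(by omega : 1 ≤ k - t), (by omega : k - t < n)⟩, ?_⟩,
      fun ht2 => ⟨⟨(by omega : 1 ≤ k - (t - 1)), (by omega : k - (t - 1) < n)⟩, ?_⟩,
      fun ht3 => ⟨⟨(by omega : 1 ≤ k - (t + 1)), (by omega : k - (t + 1) < n)⟩, ?_⟩⟩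
    · refine flt (z * descProd n (k - 1) (k - t + 1))
        (fun v => zFn i k (descFn (k - 1) (k - t + 1) v)) (key2 (k - t + 1) (by omega))
        (k - t) (k - t - 1) (by omega) (by omega) ?_
      show zFn i k (descFn (k - 1) (k - t + 1) (k - t)) <
        zFn i k (descFn (k - 1) (k - t + 1) (k - t - 1))
      rw [show descFn (k - 1) (k - t + 1) (k - t) = k - 1 from by
            simp only [descFn]; split_ifs <;> omega,
          show descFn (k - 1) (k - t + 1) (k - t - 1) = k - t - 1 from by
            simp only [descFn]; split_ifs <;> omega]
      simp only [zFn]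
      split_ifs <;> omega
    · refine flt (z * descProd n (k - 1) (k - t + 1))
        (fun v => zFn i k (descFn (k - 1) (k - t + 1) v)) (key2 (k - t + 1) (by omega))
        (k - (t - 1) - 1) (k - (t - 1)) (by omega) (by omega) ?_
      show zFn i k (descFn (k - 1) (k - t + 1) (k - (t - 1) - 1)) <
        zFn i k (descFn (k - 1) (k - t + 1) (k - (t - 1)))
      rw [show descFn (k - 1) (k - t + 1) (k - (t - 1) - 1) = k - 1 from by
            simp only [descFn]; split_ifs <;> omega,
          show descFn (k - 1) (k - t + 1) (k - (t - 1)) = k - t from by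
            simp only [descFn]; split_ifs <;> omega]
      simp only [zFn]
      split_ifs <;> omega
    · refine flt (z * descProd n (k - 1) (k - t + 1))
        (fun v => zFn i k (descFn (k - 1) (k - t + 1) v)) (key2 (k - t + 1) (by omega))
        (k - (t + 1) - 1) (k - (t + 1)) (by omega) (by omega) ?_
      show zFn i k (descFn (k - 1) (k - t + 1) (k - (t + 1) - 1)) <
        zFn i k (descFn (k - 1) (k - t + 1) (k - (t + 1)))
      rw [show descFn (k - 1) (k - t + 1) (k - (t + 1) - 1) = k - t - 2 from by
            simp only [descFn]; split_ifs <;> omega,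
          show descFn (k - 1) (k - t + 1) (k - (t + 1)) = k - t - 1 from by
            simp only [descFn]; split_ifs <;> omega]
      simp only [zFn]
      split_ifs <;> omega
end
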